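/- arXiv:2007.08819 — 5 statements merged into one kernel-verified Lean document; each statement's English description precedes it below -/
import Mathlib

section
/- Let G be a group and F an automorphism of G such that the Lang map g ↦ g·F(g)⁻¹ is surjective. Then there exists a unique map Sh from the set of conjugacy classes of the fixed subgroup G^F to itself such that for every λ ∈ G for which λ·F(λ)⁻¹ is fixed by F, Sh sends the G^F-conjugacy class of λ·F(λ)⁻¹ to the G^F-conjugacy class of F(λ)⁻¹·λ (both elements lie in G^F). -/
/-- The subgroup `G^F` of fixed points of an automorphism `F` of `G`. -/
def fixedSubgroup {G : Type*} [Group G] (F : G ≃* G) : Subgroup G where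
  carrier := {g | F g = g}
  one_mem' := by simp
  mul_mem' := by
    intro a b ha hb
    simp only [Set.mem_setOf_eq] at *
    rw [map_mul, ha, hb]
  inv_mem' := by
    intro a ha
    simp only [Set.mem_setOf_eq] at *
    rw [map_inv, ha]

section ShintaniAux

variable {G : Type*} [Group G] (F : G ≃* G)

lemma shintani_fix_back (l : G) (h : F (l * (F l)⁻¹) = l * (F l)⁻¹) :
    F ((F l)⁻¹ * l) = (F l)⁻¹ * l := by
  rw [map_mul, map_inv] at h ⊢
  have h2 : (F (F l))⁻¹ = (F l)⁻¹ * (l * (F l)⁻¹) := by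
    rw [← h]; group
  rw [h2]; group

lemma shintani_eq_case (l m : G) (h : l * (F l)⁻¹ = m * (F m)⁻¹) :
    ∃ y : G, F y = y ∧ y * ((F l)⁻¹ * l) * y⁻¹ = (F m)⁻¹ * m := by
  have key : m⁻¹ * l = (F m)⁻¹ * F l := by
    have h' := congrArg (fun x => m⁻¹ * x * F l) h
    simpa [mul_assoc] using h'
  refine ⟨m⁻¹ * l, ?_, ?_⟩
  · rw [map_mul, map_inv, ← key]
  · calc (m⁻¹ * l) * ((F l)⁻¹ * l) * (m⁻¹ * l)⁻¹
        = m⁻¹ * (l * (F l)⁻¹) * m := by group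
      _ = m⁻¹ * (m * (F m)⁻¹) * m := by rw [h]
      _ = (F m)⁻¹ * m := by group

lemma shintani_welldef (l m x : G) (hx : F x = x)
    (h : x * (l * (F l)⁻¹) * x⁻¹ = m * (F m)⁻¹) :
    ∃ y : G, F y = y ∧ y * ((F l)⁻¹ * l) * y⁻¹ = (F m)⁻¹ * m := by
  have h1 : (x * l) * (F (x * l))⁻¹ = m * (F m)⁻¹ := by
    rw [map_mul, hx, ← h]; group
  obtain ⟨y, hy, hyc⟩ := shintani_eq_case F (x * l) m h1
  refine ⟨y, hy, ?_⟩
  have h2 : (F (x * l))⁻¹ * (x * l) = (F l)⁻¹ * l := by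
    rw [map_mul, hx]; group
  rw [← h2]; exact hyc

/-- conjugacy-class level well-definedness, phrased in the subgroup -/
lemma shintani_mk_welldef (l m : G) (a b a' b' : fixedSubgroup F)
    (ha : (a : G) = l * (F l)⁻¹) (hb : (b : G) = (F l)⁻¹ * l)
    (ha' : (a' : G) = m * (F m)⁻¹) (hb' : (b' : G) = (F m)⁻¹ * m)
    (hconj : ConjClasses.mk a = ConjClasses.mk a') :
    ConjClasses.mk b = ConjClasses.mk b' := by
  rw [ConjClasses.mk_eq_mk_iff_isConj] at hconj ⊢
  rw [isConj_iff] at hconj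
  obtain ⟨x, hx⟩ := hconj
  have hxG : (x : G) * (l * (F l)⁻¹) * (x : G)⁻¹ = m * (F m)⁻¹ := by
    rw [← ha, ← ha']
    exact_mod_cast congrArg (Subtype.val) hx
  obtain ⟨y, hy, hyc⟩ := shintani_welldef F l m x x.2 hxG
  rw [isConj_iff]
  refine ⟨⟨y, hy⟩, ?_⟩
  apply Subtype.ext
  push_cast
  rw [hb, hb']
  exact hyc

end ShintaniAux

/-- If the Lang map `g ↦ g·F(g)⁻¹` is surjective, the classical Shintani
twisting is well defined: there is a unique map `Sh` on conjugacy classes of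
`G^F` sending the class of `λ·F(λ)⁻¹` (when this element is fixed by `F`) to
the class of `F(λ)⁻¹·λ` (which is then also fixed by `F`). -/
theorem shintani_twisting_exists_unique {G : Type*} [Group G] (F : G ≃* G)
    (hLang : Function.Surjective fun g : G => g * (F g)⁻¹) :
    ∃! Sh : ConjClasses (fixedSubgroup F) → ConjClasses (fixedSubgroup F),
      ∀ (l : G) (a b : fixedSubgroup F),
        (a : G) = l * (F l)⁻¹ → (b : G) = (F l)⁻¹ * l →
          Sh (ConjClasses.mk a) = ConjClasses.mk b := by
  classical
  -- for each a in the fixed subgroup, choose l with l * (F l)⁻¹ = a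
  have hchoice : ∀ a : fixedSubgroup F, ∃ l : G, l * (F l)⁻¹ = (a : G) :=
    fun a => hLang (a : G)
  let lf : fixedSubgroup F → G := fun a => (hchoice a).choose
  have hlf : ∀ a : fixedSubgroup F, lf a * (F (lf a))⁻¹ = (a : G) :=
    fun a => (hchoice a).choose_spec
  have hbmem : ∀ a : fixedSubgroup F, (F (lf a))⁻¹ * lf a ∈ fixedSubgroup F := by
    intro a
    exact shintani_fix_back F (lf a) (by rw [hlf a]; exact a.2)
  let bf : fixedSubgroup F → fixedSubgroup F := fun a => ⟨(F (lf a))⁻¹ * lf a, hbmem a⟩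
  -- the map on conjugacy classes
  let Sh : ConjClasses (fixedSubgroup F) → ConjClasses (fixedSubgroup F) :=
    fun c => ConjClasses.mk (bf c.exists_rep.choose)
  have hSh : ∀ (l : G) (a b : fixedSubgroup F),
      (a : G) = l * (F l)⁻¹ → (b : G) = (F l)⁻¹ * l →
        Sh (ConjClasses.mk a) = ConjClasses.mk b := by
    intro l a b ha hb
    set c := ConjClasses.mk a with hc
    have hrep : ConjClasses.mk c.exists_rep.choose = c := c.exists_rep.choose_spec
    show ConjClasses.mk (bf c.exists_rep.choose) = ConjClasses.mk b
    exact shintani_mk_welldef F (lf c.exists_rep.choose) l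
      c.exists_rep.choose (bf c.exists_rep.choose) a b
      (hlf _).symm rfl ha hb (by rw [hrep, hc])
  refine ⟨Sh, hSh, ?_⟩
  intro Sh' hSh'
  funext c
  obtain ⟨a, ha⟩ := c.exists_rep
  have h1 := hSh' (lf a) a (bf a) (hlf a).symm rfl
  have h2 := hSh (lf a) a (bf a) (hlf a).symm rfl
  rw [← ha, h1, h2]
end

section
/- Let G be a group and F an automorphism of G such that the Lang map g ↦ g⁻¹·F(g) is surjective. Let P = {(x,y) ∈ G × G ∣ x·F(y)·x⁻¹ = y} (encoding commuting pairs (xF, y) in G ⋊ ⟨F⟩), with the simultaneous conjugation action of G given by g·(x,y) = (g·x·F(g)⁻¹, g·y·g⁻¹). Then the map sending y ∈ G^F to the orbit of the pair (1, y) induces a bijection between the set of conjugacy classes of the fixed subgroup G^F and the set of G-orbits on P. -/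
/-- The set `P` of pairs `(x, y)` with `x·F(y)·x⁻¹ = y` (encoding commuting
pairs `(xF, y)` in `G ⋊ ⟨F⟩`), with the equivalence relation given by
simultaneous conjugation `g·(x, y) = (g·x·F(g)⁻¹, g·y·g⁻¹)`. -/
def pairSetoid {G : Type*} [Group G] (F : G ≃* G) :
    Setoid {p : G × G // p.1 * F p.2 * p.1⁻¹ = p.2} where
  r p q := ∃ g : G, q.1.1 = g * p.1.1 * (F g)⁻¹ ∧ q.1.2 = g * p.1.2 * g⁻¹
  iseqv := by
    constructor
    · intro p
      exact ⟨1, by simp⟩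
    · rintro p q ⟨g, h1, h2⟩
      exact ⟨g⁻¹, by rw [h1, map_inv]; group, by rw [h2]; group⟩
    · rintro p q r ⟨g, h1, h2⟩ ⟨g', h1', h2'⟩
      exact ⟨g' * g, by rw [h1', h1, map_mul]; group, by rw [h2', h2]; group⟩

/-- When the Lang map `g ↦ g⁻¹·F(g)` is surjective, the map sending `y ∈ G^F`
to the simultaneous-conjugation orbit of the pair `(1, y)` induces a bijection
between the conjugacy classes of `G^F` and the `G`-orbits on the set of
commuting pairs. -/
theorem conjClasses_equiv_commuting_pair_orbits {G : Type*} [Group G] (F : G ≃* G)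
    (hLang : Function.Surjective fun g : G => g⁻¹ * F g) :
    ∃ e : ConjClasses (fixedSubgroup F) ≃ Quotient (pairSetoid F),
      ∀ y : fixedSubgroup F,
        e (ConjClasses.mk y) =
          Quotient.mk (pairSetoid F)
            ⟨(1, (y : G)), by rw [one_mul, inv_one, mul_one]; exact y.2⟩ := by
  classical
  set f : fixedSubgroup F → Quotient (pairSetoid F) := fun y =>
    Quotient.mk (pairSetoid F)
      ⟨(1, (y : G)), by rw [one_mul, inv_one, mul_one]; exact y.2⟩ with hfdef
  have hf : ∀ a b : fixedSubgroup F, IsConj a b → f a = f b := by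
    intro a b hab
    obtain ⟨c, hc⟩ := isConj_iff.mp hab
    apply Quotient.sound
    refine ⟨(c : G), ?_, ?_⟩
    · have : F (c : G) = (c : G) := c.2
      simp [this]
    · rw [← hc]; simp
  let f' : ConjClasses (fixedSubgroup F) → Quotient (pairSetoid F) :=
    Quotient.lift f (fun a b h => hf a b h)
  have hbij : Function.Bijective f' := by
    constructor
    · intro a b hab
      induction a using Quotient.inductionOn with
      | h a =>
      induction b using Quotient.inductionOn with
      | h b =>
      obtain ⟨g, hg1, hg2⟩ := Quotient.exact hab
      simp only at hg1 hg2
      have hgfix : g ∈ fixedSubgroup F := by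
        have h1 : g * (F g)⁻¹ = 1 := by
          have := hg1.symm; rw [mul_one] at this; exact this
        show F g = g
        exact (mul_inv_eq_one.mp h1).symm
      apply Quotient.sound
      exact isConj_iff.mpr ⟨⟨g, hgfix⟩, by
        ext
        push_cast
        exact hg2.symm⟩
    · intro q
      induction q using Quotient.inductionOn with
      | h p =>
      obtain ⟨⟨x, y⟩, hp⟩ := p
      obtain ⟨g, hg⟩ := hLang x
      simp only at hg
      have hyfix : g * y * g⁻¹ ∈ fixedSubgroup F := by
        show F (g * y * g⁻¹) = g * y * g⁻¹
        simp only at hp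
        have hFy : F y = x⁻¹ * y * x := by
          conv_rhs => rw [← hp]
          group
        rw [map_mul, map_mul, map_inv, hFy, ← hg]
        group
      refine ⟨ConjClasses.mk ⟨g * y * g⁻¹, hyfix⟩, ?_⟩
      apply Quotient.sound
      refine ⟨g⁻¹, ?_, ?_⟩
      · simp only [map_inv]
        rw [← hg]; group
      · simp only
        group
  refine ⟨Equiv.ofBijective f' hbij, fun y => rfl⟩
end

section
/- Let n be an odd natural number, k ≥ 1 a natural number, and m an integer such that n^k divides m − 1. Then there exists an integer t with m^n − 1 = n·(m − 1)·t and t ≡ 1 (mod n^k). -/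
/-- The number-theoretic lemma of the paper: if `n` is odd, `k ≥ 1` and `n^k`
divides `m - 1`, then `(m^n − 1)/(n(m − 1))` is an integer congruent to `1`
modulo `n^k`. -/
theorem pow_sub_one_div_congr_one (n k : ℕ) (hn : Odd n) (hk : 1 ≤ k) (m : ℤ)
    (h : (n : ℤ) ^ k ∣ m - 1) :
    ∃ t : ℤ, m ^ n - 1 = (n : ℤ) * (m - 1) * t ∧ t ≡ 1 [ZMOD (n : ℤ) ^ k] := by
  set S : ℤ := ∑ i ∈ Finset.range n, ∑ j ∈ Finset.range i, m ^ j with hS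
  have hnm : (n : ℤ) ∣ m - 1 := dvd_trans (dvd_pow_self _ (by omega)) h
  -- n divides S
  have hdvdS : (n : ℤ) ∣ S := by
    rw [← ZMod.intCast_zmod_eq_zero_iff_dvd]
    have hm1 : (m : ZMod n) = 1 := by
      have : ((m - 1 : ℤ) : ZMod n) = 0 := by
        rw [ZMod.intCast_zmod_eq_zero_iff_dvd]; exact hnm
      push_cast at this
      linear_combination this
    push_cast [hS, hm1]
    simp only [one_pow, Finset.sum_const, Finset.card_range, nsmul_eq_mul, mul_one]
    have : ∑ i ∈ Finset.range n, ((i : ZMod n)) = ((∑ i ∈ Finset.range n, i : ℕ) : ZMod n) := by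
      push_cast; ring
    rw [this]
    obtain ⟨r, hr⟩ := hn
    have hsum : ∑ i ∈ Finset.range n, i = n * r := by
      have h2 : (∑ i ∈ Finset.range n, i) * 2 = n * (n - 1) := Finset.sum_range_id_mul_two n
      have h3 : n - 1 = 2 * r := by omega
      rw [h3] at h2
      have h4 : n * (2 * r) = (n * r) * 2 := by ring
      omega
    rw [hsum]
    push_cast
    simp [ZMod.natCast_self]
  obtain ⟨c, hc⟩ := hdvdS
  refine ⟨1 + (m - 1) * c, ?_, ?_⟩
  · have hgeom : (∑ i ∈ Finset.range n, m ^ i) * (m - 1) = m ^ n - 1 := geom_sum_mul m n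
    have hkey : ∑ i ∈ Finset.range n, m ^ i = n + S * (m - 1) := by
      have step : ∀ i ∈ Finset.range n, m ^ i = 1 + (∑ j ∈ Finset.range i, m ^ j) * (m - 1) := by
        intro i _
        rw [geom_sum_mul]; ring
      rw [Finset.sum_congr rfl step, Finset.sum_add_distrib, Finset.sum_const,
        Finset.card_range, ← Finset.sum_mul, ← hS]
      simp
    rw [← hgeom, hkey, hc]
    ring
  · have h2 : ((n : ℤ) ^ k) ∣ 1 - (1 + (m - 1) * c) := by
      rw [show (1 : ℤ) - (1 + (m - 1) * c) = -((m - 1) * c) by ring]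
      exact dvd_neg.mpr (h.mul_right c)
    exact Int.modEq_iff_dvd.mpr h2
end

section
/- Let k be a field, n ≥ 1, and ζ ∈ k a primitive n-th root of unity. Let s̄ be the image in PGL_n(k) of the diagonal matrix diag(1, ζ, ζ², …, ζ^{n−1}) ∈ GL_n(k), and let c̄ be the image of the permutation matrix c of the n-cycle (1 2 … n). Then the centralizer of s̄ in PGL_n(k) is the subgroup generated by c̄ together with the image of the subgroup of all invertible diagonal matrices. In particular this centralizer is the semidirect product of the image T̄ of the diagonal torus with the cyclic group of order n generated by c̄. -/
/-- Any element of the center of `GL n k` is a scalar matrix. -/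
lemma aux_center_scalar {k : Type*} [Field k] {n : ℕ}
    {u : GL (Fin n) k} (hu : u ∈ Subgroup.center (GL (Fin n) k)) :
    ∃ r : k, (u : Matrix (Fin n) (Fin n) k) = Matrix.scalar (Fin n) r := by
  have h := Subgroup.mem_center_iff.mp hu
  have : (u : Matrix (Fin n) (Fin n) k) ∈ Set.range (Matrix.scalar (Fin n)) := by
    apply Matrix.mem_range_scalar_of_commute_transvectionStruct
    intro t
    have ht : (⟨t.toMatrix, t.inv.toMatrix, t.mul_inv, t.inv_mul⟩ : GL (Fin n) k) * u
        = u * ⟨t.toMatrix, t.inv.toMatrix, t.mul_inv, t.inv_mul⟩ := h _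
    have := congrArg Units.val ht
    exact this
  obtain ⟨r, hr⟩ := this
  exact ⟨r, hr.symm⟩

/-- The centralizer in `PGL_n(k)` of the image `s̄` of
`diag(1, ζ, ζ², …, ζ^{n−1})` (for `ζ` a primitive `n`-th root of unity) is the
subgroup generated by the image `c̄` of the permutation matrix of the `n`-cycle
`(1 2 … n)` together with the image of the invertible diagonal matrices. -/
theorem centralizer_in_PGL_of_diag_primitive_root {k : Type*} [Field k]
    (n : ℕ) (hn : 1 ≤ n) (ζ : k) (hζ : IsPrimitiveRoot ζ n)
    (S C : GL (Fin n) k)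
    (hS : (S : Matrix (Fin n) (Fin n) k) = Matrix.diagonal fun i : Fin n => ζ ^ (i : ℕ))
    (hC : (C : Matrix (Fin n) (Fin n) k) =
      Matrix.of fun j i : Fin n => if (j : ℕ) = ((i : ℕ) + 1) % n then 1 else 0) :
    letI π := QuotientGroup.mk' (Subgroup.center (GL (Fin n) k))
    Subgroup.centralizer {π S} =
      Subgroup.closure ({π C} ∪ π '' {D : GL (Fin n) k |
        ∃ d : Fin n → k, (D : Matrix (Fin n) (Fin n) k) = Matrix.diagonal d}) := by
  set π := QuotientGroup.mk' (Subgroup.center (GL (Fin n) k)) with hπ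
  haveI : NeZero n := ⟨by omega⟩
  have hζ0 : ζ ≠ 0 := hζ.ne_zero (by omega)
  have hpow : ∀ m : ℕ, ζ ^ (m % n) = ζ ^ m := by
    intro m
    conv_rhs => rw [← Nat.mod_add_div m n]
    rw [pow_add, pow_mul, hζ.pow_eq_one, one_pow, mul_one]
  -- the key commutation relation at the matrix level
  have hSC : (S : Matrix (Fin n) (Fin n) k) * C = ζ • ((C : Matrix (Fin n) (Fin n) k) * S) := by
    ext i j
    rw [hS, hC]
    simp only [Matrix.diagonal_mul, Matrix.mul_diagonal, Matrix.smul_apply, Matrix.of_apply,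
      smul_eq_mul]
    by_cases hij : (i : ℕ) = ((j : ℕ) + 1) % n
    · simp [hij, hpow, pow_succ, mul_comm]
    · simp [hij]
  have hSCpow : ∀ m : ℕ, (S : Matrix (Fin n) (Fin n) k) * (C : Matrix (Fin n) (Fin n) k) ^ m
      = ζ ^ m • ((C : Matrix (Fin n) (Fin n) k) ^ m * S) := by
    intro m
    induction m with
    | zero => simp
    | succ m ih =>
      rw [pow_succ, ← Matrix.mul_assoc, ih, Matrix.smul_mul, Matrix.mul_assoc, hSC,
        Matrix.mul_smul, smul_smul, ← pow_succ, ← Matrix.mul_assoc, ← pow_succ]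
  apply le_antisymm
  · -- centralizer ⊆ closure
    intro x hx
    obtain ⟨g, rfl⟩ := QuotientGroup.mk'_surjective _ x
    have hx' : π S * π g = π g * π S := by
      exact Subgroup.mem_centralizer_iff.mp hx _ (Set.mem_singleton _)
    rw [← map_mul, ← map_mul, QuotientGroup.mk'_eq_mk'] at hx'
    obtain ⟨u, hu, huv⟩ := hx'
    obtain ⟨r, hr⟩ := aux_center_scalar hu
    -- matrix-level : g * S = r • (S * g)
    have hgS : (g : Matrix (Fin n) (Fin n) k) * S = r • ((S : Matrix (Fin n) (Fin n) k) * g) := by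
      have := congrArg Units.val huv
      simp only [Units.val_mul, hr] at this
      have hsc : (Matrix.scalar (Fin n)) r = r • (1 : Matrix (Fin n) (Fin n) k) := by
        rw [Matrix.smul_one_eq_diagonal, Matrix.scalar_apply]
      rw [← this, hsc, Matrix.mul_smul, mul_one]
    -- determinant gives r ^ n = 1
    have hdetS : (S : Matrix (Fin n) (Fin n) k).det ≠ 0 :=
      ((Matrix.isUnit_iff_isUnit_det _).mp S.isUnit).ne_zero
    have hdetg : (g : Matrix (Fin n) (Fin n) k).det ≠ 0 :=
      ((Matrix.isUnit_iff_isUnit_det _).mp g.isUnit).ne_zero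
    have hrn : r ^ n = 1 := by
      have := congrArg Matrix.det hgS
      rw [Matrix.det_mul, Matrix.det_smul, Matrix.det_mul, Fintype.card_fin] at this
      have h2 : (1 : k) * ((S : Matrix (Fin n) (Fin n) k).det * (g : Matrix (Fin n) (Fin n) k).det)
          = r ^ n * ((S : Matrix (Fin n) (Fin n) k).det * (g : Matrix (Fin n) (Fin n) k).det) := by
        linear_combination this
      exact (mul_right_cancel₀ (mul_ne_zero hdetS hdetg) h2).symm
    obtain ⟨m, hm, hmr⟩ := hζ.eq_pow_of_pow_eq_one hrn
    -- h := C^m * g commutes with S on the nose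
    set h : GL (Fin n) k := C ^ m * g with hh
    have hhval : (h : Matrix (Fin n) (Fin n) k)
        = (C : Matrix (Fin n) (Fin n) k) ^ m * g := by
      rw [hh, Units.val_mul, Units.val_pow_eq_pow_val]
    have hcomm : (h : Matrix (Fin n) (Fin n) k) * S
        = (S : Matrix (Fin n) (Fin n) k) * h := by
      rw [hhval, Matrix.mul_assoc, hgS, Matrix.mul_smul, ← Matrix.mul_assoc,
        ← Matrix.mul_assoc, hSCpow, Matrix.smul_mul, hmr]
    -- h is diagonal
    have hdiag : (h : Matrix (Fin n) (Fin n) k)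
        = Matrix.diagonal (fun i => (h : Matrix (Fin n) (Fin n) k) i i) := by
      ext i j
      by_cases hij : i = j
      · subst hij; simp
      · rw [Matrix.diagonal_apply_ne _ hij]
        have := congrFun (congrFun hcomm i) j
        rw [hS] at this
        simp only [Matrix.mul_diagonal, Matrix.diagonal_mul] at this
        by_contra h0
        apply hij
        apply Fin.ext
        apply hζ.pow_inj i.isLt j.isLt
        exact mul_right_cancel₀ h0 (this.symm.trans (mul_comm _ _))
    have hg : g = (C ^ m)⁻¹ * h := by rw [hh]; group
    rw [hg, map_mul, map_inv, map_pow]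
    refine mul_mem (inv_mem (pow_mem (Subgroup.subset_closure ?_) m))
      (Subgroup.subset_closure ?_)
    · exact Set.mem_union_left _ rfl
    · exact Set.mem_union_right _ ⟨h, ⟨_, hdiag⟩, rfl⟩
  · -- closure ⊆ centralizer
    rw [Subgroup.closure_le]
    rintro x (rfl | ⟨D, ⟨d, hd⟩, rfl⟩)
    · -- π C centralizes π S
      rw [SetLike.mem_coe, Subgroup.mem_centralizer_iff]
      rintro y ⟨rfl⟩
      rw [← map_mul, ← map_mul, QuotientGroup.mk'_eq_mk']
      -- witness : the central scalar ζ⁻¹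
      refine ⟨⟨ζ⁻¹ • 1, ζ • 1, ?_, ?_⟩, ?_, ?_⟩
      · rw [Matrix.smul_mul, Matrix.mul_smul, smul_smul, inv_mul_cancel₀ hζ0, one_smul, one_mul]
      · rw [Matrix.smul_mul, Matrix.mul_smul, smul_smul, mul_inv_cancel₀ hζ0, one_smul, one_mul]
      · rw [Subgroup.mem_center_iff]
        intro g
        ext
        simp only [Units.val_mul]
        rw [Matrix.mul_smul, Matrix.smul_mul, mul_one, one_mul]
      · ext
        simp only [Units.val_mul]
        rw [Matrix.mul_smul, mul_one, hSC, smul_smul, inv_mul_cancel₀ hζ0, one_smul]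
    · -- diagonal matrices centralize π S
      rw [SetLike.mem_coe, Subgroup.mem_centralizer_iff]
      rintro y ⟨rfl⟩
      rw [← map_mul, ← map_mul]
      congr 1
      ext
      simp only [Units.val_mul]
      rw [hS, hd, Matrix.diagonal_mul_diagonal, Matrix.diagonal_mul_diagonal]
      congr 1
      ext i
      exact mul_comm _ _
end

section
/- Let k be an algebraically closed field of characteristic p > 0, let q be a power of p, and let F₋ : GL_n(k) → GL_n(k) be the map sending a matrix x to the entrywise q-th power of the inverse of its transpose; it is a group endomorphism and induces an endomorphism of PGL_n(k). Let n ≥ 2 and ζ ∈ k a primitive n-th root of unity. Then the image s̄ in PGL_n(k) of the diagonal matrix diag(1, ζ, ζ², …, ζ^{n−1}) satisfies F₋(s̄) = s̄ if and only if n divides q + 1. -/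
/-!
Both `S` and `T = F₋(S)` are diagonal, so `T⁻¹ S = diag(1, c, c², …, c^{n-1})` with `c = ζ^{q+1}`.
Since the centre of `GL_n(k)` consists of the scalar matrices and `n ≥ 2`, this quotient is
central exactly when `c = 1`, i.e. when the order `n` of `ζ` divides `q + 1`.
-/

open Matrix

namespace Matrix.GeneralLinearGroup

lemma val_inv_of_val_eq_diagonal {ι K : Type*} [Fintype ι] [DecidableEq ι] [Field K]
    {g : GL ι K} {d : ι → K} (hg : g.val = diagonal d) : (g⁻¹).val = diagonal d⁻¹ := by
  have hd : ∀ i, d i ≠ 0 := fun i ↦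
    (Pi.isUnit_iff.mp (isUnit_diagonal.mp (hg ▸ g.isUnit)) i).ne_zero
  rw [coe_units_inv, hg]
  refine inv_eq_right_inv ?_
  rw [diagonal_mul_diagonal, ← diagonal_one]
  exact congrArg diagonal (funext fun i ↦ mul_inv_cancel₀ (hd i))

lemma mem_center_iff_of_val_eq_diagonal {ι R : Type*} [Fintype ι] [DecidableEq ι] [CommRing R]
    {g : GL ι R} {d : ι → R} (hg : g.val = diagonal d) :
    g ∈ Subgroup.center (GL ι R) ↔ ∃ a, (fun _ => a) = d := by
  simp only [mem_center_iff_val_mem_range_scalar, hg, Set.mem_range, scalar_apply,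
    diagonal_injective.eq_iff]

lemma mem_center_iff_of_val_eq_diagonal_pow {R : Type*} [CommRing R] {n : ℕ} (hn : 2 ≤ n)
    {g : GL (Fin n) R} {c : R} (hg : g.val = diagonal fun i : Fin n => c ^ (i : ℕ)) :
    g ∈ Subgroup.center (GL (Fin n) R) ↔ c = 1 := by
  rw [mem_center_iff_of_val_eq_diagonal hg]
  constructor
  · rintro ⟨a, ha⟩
    have h₀ := congrFun ha ⟨0, by omega⟩
    have h₁ := congrFun ha ⟨1, by omega⟩
    simp only [pow_zero, pow_one] at h₀ h₁
    rw [← h₁, h₀]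
  · rintro rfl
    exact ⟨1, by simp only [one_pow]⟩

end Matrix.GeneralLinearGroup

open Matrix.GeneralLinearGroup in
theorem twisted_frobenius_fixes_diag_in_PGL_iff_general {k : Type*} [Field k]
    (p : ℕ) (hp : p.Prime) (q : ℕ) (hq : ∃ m : ℕ, 0 < m ∧ q = p ^ m)
    (n : ℕ) (hn : 2 ≤ n) (ζ : k) (hζ : IsPrimitiveRoot ζ n)
    (S T : GL (Fin n) k)
    (hS : (S : Matrix (Fin n) (Fin n) k) = Matrix.diagonal fun i : Fin n => ζ ^ (i : ℕ))
    (hT : (T : Matrix (Fin n) (Fin n) k) =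
      ((S⁻¹ : GL (Fin n) k) : Matrix (Fin n) (Fin n) k).transpose.map fun x => x ^ q) :
    QuotientGroup.mk' (Subgroup.center (GL (Fin n) k)) T =
      QuotientGroup.mk' (Subgroup.center (GL (Fin n) k)) S ↔ n ∣ q + 1 := by
  obtain ⟨m, -, rfl⟩ := hq
  have hT_diag : T.val = diagonal fun i : Fin n => (ζ ^ (i : ℕ))⁻¹ ^ p ^ m := by
    rw [hT, val_inv_of_val_eq_diagonal hS, diagonal_transpose,
      diagonal_map (f := fun x : k ↦ x ^ p ^ m) (zero_pow (pow_ne_zero m hp.ne_zero))]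
    rfl
  have hTS : (T⁻¹ * S).val = diagonal fun i : Fin n => (ζ ^ (p ^ m + 1)) ^ (i : ℕ) := by
    rw [Units.val_mul, val_inv_of_val_eq_diagonal hT_diag, hS, diagonal_mul_diagonal]
    congr 1
    funext i
    simp only [Pi.inv_apply, inv_pow, inv_inv]
    ring
  rw [QuotientGroup.mk'_apply, QuotientGroup.mk'_apply, QuotientGroup.eq,
    mem_center_iff_of_val_eq_diagonal_pow hn hTS, hζ.pow_eq_one_iff_dvd]

/-- Over an algebraically closed field of characteristic `p > 0`, with `q` a
power of `p` and `F₋` the twisted Frobenius `x ↦ (ᵗ(x⁻¹))^{(q)}` (entrywise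
`q`-th power of the inverse transpose), the image in `PGL_n(k)` of
`diag(1, ζ, ζ², …, ζ^{n−1})` (for `ζ` a primitive `n`-th root of unity,
`n ≥ 2`) is `F₋`-stable if and only if `n` divides `q + 1`. -/
theorem twisted_frobenius_fixes_diag_in_PGL_iff {k : Type*} [Field k] [IsAlgClosed k]
    (p : ℕ) (hp : p.Prime) [CharP k p] (q : ℕ) (hq : ∃ m : ℕ, 0 < m ∧ q = p ^ m)
    (n : ℕ) (hn : 2 ≤ n) (ζ : k) (hζ : IsPrimitiveRoot ζ n)
    (S T : GL (Fin n) k)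
    (hS : (S : Matrix (Fin n) (Fin n) k) = Matrix.diagonal fun i : Fin n => ζ ^ (i : ℕ))
    (hT : (T : Matrix (Fin n) (Fin n) k) =
      ((S⁻¹ : GL (Fin n) k) : Matrix (Fin n) (Fin n) k).transpose.map fun x => x ^ q) :
    QuotientGroup.mk' (Subgroup.center (GL (Fin n) k)) T =
      QuotientGroup.mk' (Subgroup.center (GL (Fin n) k)) S ↔ n ∣ q + 1 :=
  twisted_frobenius_fixes_diag_in_PGL_iff_general p hp q hq n hn ζ hζ S T hS hT
end
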